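/- If D is a ∗-Prüfer domain, then (FG)⁻¹ = (F⁻¹G⁻¹)^∗ for all nonzero finitely generated fractional ideals F, G of D. -/

import Mathlib

/-!
Any `∗`-operation fixes divisorial ideals, so `(F⁻¹G⁻¹)^∗ ⊆ (FG)⁻¹` since `F⁻¹G⁻¹ ⊆ (FG)⁻¹`.
Conversely, `(AB^∗)^∗ = (AB)^∗` and `(FF⁻¹)^∗ = D` give
`(FG)⁻¹ ⊆ ((FG)⁻¹)^∗ = ((FG)⁻¹ (FF⁻¹)^∗)^∗ = ((FG)⁻¹ F · F⁻¹)^∗ ⊆ (G⁻¹F⁻¹)^∗`,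
because `(FG)⁻¹ F ⊆ G⁻¹`.
-/

open FractionalIdeal

/-- A star operation on an integral domain `D` with fraction field `K`, acting on
fractional ideals: it fixes `D`, is extensive, monotone, idempotent (all on nonzero
ideals), and commutes with multiplication by nonzero principal fractional ideals. -/
structure StarOp (D : Type*) [CommRing D] [IsDomain D] (K : Type*) [Field K]
    [Algebra D K] [IsFractionRing D K] where
  star : FractionalIdeal (nonZeroDivisors D) K → FractionalIdeal (nonZeroDivisors D) K
  star_one : star 1 = 1
  le_star : ∀ {A}, A ≠ 0 → A ≤ star A
  star_mono : ∀ {A B}, A ≠ 0 → A ≤ B → star A ≤ star B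
  star_idem : ∀ {A}, A ≠ 0 → star (star A) = star A
  star_smul : ∀ {A : FractionalIdeal (nonZeroDivisors D) K} (x : K), x ≠ 0 → A ≠ 0 →
    star (spanSingleton (nonZeroDivisors D) x * A) = spanSingleton (nonZeroDivisors D) x * star A

variable {D K : Type*} [CommRing D] [IsDomain D] [Field K] [Algebra D K] [IsFractionRing D K]

namespace FractionalIdeal

section NoZeroDivisors

variable {R P : Type*} [CommRing R] {S : Submonoid R} [CommRing P] [Algebra R P]
  [NoZeroDivisors P]

instance : NoZeroDivisors (FractionalIdeal S P) where
  eq_zero_or_eq_zero_of_mul_eq_zero {A B} h := by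
    have h' := congrArg ((↑) : FractionalIdeal S P → Submodule R P) h
    rwa [coe_mul, coe_zero, Submodule.mul_eq_bot, coeToSubmodule_eq_bot,
      coeToSubmodule_eq_bot] at h'

end NoZeroDivisors

variable {F G I J : FractionalIdeal (nonZeroDivisors D) K}

theorem inv_ne_zero_of_ne_zero (hI : I ≠ 0) : I⁻¹ ≠ 0 := by
  intro h
  have hden := den_mem_inv hI
  rw [h, mem_zero_iff, IsFractionRing.to_map_eq_zero_iff] at hden
  exact nonZeroDivisors.coe_ne_zero I.den hden

theorem le_inv_iff_mul_le (hJ : J ≠ 0) : I ≤ J⁻¹ ↔ I * J ≤ 1 := by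
  rw [inv_eq, le_div_iff_mul_le hJ]

theorem mul_inv_le_one (I : FractionalIdeal (nonZeroDivisors D) K) : I * I⁻¹ ≤ 1 :=
  mul_one_div_le_one

theorem inv_mul_inv_le_inv_mul (hFG : F * G ≠ 0) : F⁻¹ * G⁻¹ ≤ (F * G)⁻¹ := by
  rw [le_inv_iff_mul_le hFG, mul_mul_mul_comm, mul_comm F⁻¹, mul_comm G⁻¹]
  calc F * F⁻¹ * (G * G⁻¹) ≤ 1 * 1 := by gcongr <;> exact mul_inv_le_one _
    _ = 1 := one_mul 1

theorem inv_mul_mul_le_inv (hG : G ≠ 0) : (F * G)⁻¹ * F ≤ G⁻¹ := by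
  rw [le_inv_iff_mul_le hG, mul_assoc, mul_comm]
  exact mul_inv_le_one _

end FractionalIdeal

namespace StarOp

variable (s : StarOp D K) {A B J : FractionalIdeal (nonZeroDivisors D) K}

theorem star_ne_zero (hA : A ≠ 0) : s.star A ≠ 0 :=
  ne_bot_of_le_ne_bot hA (s.le_star hA)

theorem mul_star_le_star_mul (hB : B ≠ 0) : A * s.star B ≤ s.star (A * B) := by
  rw [mul_le]
  intro a ha b hb
  rcases eq_or_ne a 0 with rfl | ha0
  · rw [zero_mul]
    exact zero_mem _
  have hspan : spanSingleton (nonZeroDivisors D) a * B ≤ A * B := by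
    gcongr
    exact spanSingleton_le_iff_mem.2 ha
  have hstar : spanSingleton (nonZeroDivisors D) a * s.star B ≤ s.star (A * B) := by
    rw [← s.star_smul a ha0 hB]
    exact s.star_mono (mul_ne_zero (spanSingleton_ne_zero_iff.2 ha0) hB) hspan
  exact hstar (mul_mem_mul (mem_spanSingleton_self _ a) hb)

theorem star_mul_star (hA : A ≠ 0) (hB : B ≠ 0) : s.star (A * s.star B) = s.star (A * B) := by
  have hAB : A * B ≠ 0 := mul_ne_zero hA hB
  apply le_antisymm
  · calc s.star (A * s.star B) ≤ s.star (s.star (A * B)) :=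
          s.star_mono (mul_ne_zero hA (s.star_ne_zero hB)) (s.mul_star_le_star_mul hB)
      _ = s.star (A * B) := s.star_idem hAB
  · exact s.star_mono hAB (mul_le_mul_right (s.le_star hB) A)

theorem star_le_inv (hA : A ≠ 0) (hJ : J ≠ 0) (hAJ : A ≤ J⁻¹) : s.star A ≤ J⁻¹ := by
  rw [le_inv_iff_mul_le hJ, mul_comm] at hAJ ⊢
  calc J * s.star A ≤ s.star (J * A) := s.mul_star_le_star_mul hA
    _ ≤ s.star 1 := s.star_mono (mul_ne_zero hJ hA) hAJ
    _ = 1 := s.star_one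

end StarOp

/-- In a `∗`-Prüfer domain, `(FG)⁻¹ = (F⁻¹G⁻¹)^∗` for all nonzero finitely
generated fractional ideals `F`, `G`. -/
theorem starPrufer_inv_mul_fg (s : StarOp D K)
    (hP : ∀ F : FractionalIdeal (nonZeroDivisors D) K, F ≠ 0 → (F : Submodule D K).FG → s.star (F * F⁻¹) = 1) :
    ∀ F G : FractionalIdeal (nonZeroDivisors D) K, F ≠ 0 → (F : Submodule D K).FG → G ≠ 0 → (G : Submodule D K).FG →
      (F * G)⁻¹ = s.star (F⁻¹ * G⁻¹) := by
  intro F G hF hFfg hG _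
  have hFG : F * G ≠ 0 := mul_ne_zero hF hG
  have hFinv : F⁻¹ ≠ 0 := inv_ne_zero_of_ne_zero hF
  have hFGinv : (F * G)⁻¹ ≠ 0 := inv_ne_zero_of_ne_zero hFG
  apply le_antisymm
  · calc (F * G)⁻¹ ≤ s.star (F * G)⁻¹ := s.le_star hFGinv
      _ = s.star ((F * G)⁻¹ * s.star (F * F⁻¹)) := by rw [hP F hF hFfg, mul_one]
      _ = s.star ((F * G)⁻¹ * F * F⁻¹) := by
          rw [s.star_mul_star hFGinv (mul_ne_zero hF hFinv), mul_assoc]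
      _ ≤ s.star (F⁻¹ * G⁻¹) := by
          refine s.star_mono (mul_ne_zero (mul_ne_zero hFGinv hF) hFinv) ?_
          rw [mul_comm F⁻¹]
          gcongr
          exact inv_mul_mul_le_inv hG
  · exact s.star_le_inv (mul_ne_zero hFinv (inv_ne_zero_of_ne_zero hG)) hFG
      (inv_mul_inv_le_inv_mul hFG)
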